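/- Let U be a unitary operator on G and set A = i(1+U) and B = 1−U. Then ‖M^{A,B} x‖ = 2‖x‖ for every x ∈ G ⊕ G; equivalently, (1/2)·M^{A,B} is a unitary operator on G ⊕ G. -/

import Mathlib

open ContinuousLinearMap

variable {G : Type*} [NormedAddCommGroup G] [InnerProductSpace ℂ G] [CompleteSpace G]

/-- The operator `M^{A,B}` on `G × G`, `(x₁,x₂) ↦ (A x₁ - B x₂, B x₁ + A x₂)`. -/
noncomputable def MAB (A B : G →L[ℂ] G) : (G × G) →L[ℂ] (G × G) :=
  ((A.comp (fst ℂ G G)) - (B.comp (snd ℂ G G))).prod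
    ((B.comp (fst ℂ G G)) + (A.comp (snd ℂ G G)))

/-- The linear relation `Λ^{A,B} = {(x₁,x₂) : A x₁ = B x₂}`. -/
def LambdaAB (A B : G →L[ℂ] G) : Submodule ℂ (G × G) where
  carrier := {p | A p.1 = B p.2}
  add_mem' := by
    intro a b ha hb
    simp only [Set.mem_setOf_eq] at *
    simp [ha, hb]
  zero_mem' := by simp
  smul_mem' := by
    intro c p hp
    simp only [Set.mem_setOf_eq] at *
    simp [hp]

/-- The adjoint of a linear relation. -/
def relAdjoint (Λ : Submodule ℂ (G × G)) : Submodule ℂ (G × G) where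
  carrier := {p | ∀ q ∈ Λ, (inner ℂ p.1 q.2 : ℂ) = inner ℂ p.2 q.1}
  add_mem' := by
    intro a b ha hb q hq
    simp [inner_add_left, ha q hq, hb q hq]
  zero_mem' := by
    intro q hq; simp
  smul_mem' := by
    intro c p hp q hq
    simp [inner_smul_left, hp q hq]

/-- A linear relation is self-adjoint if it equals its adjoint. -/
def IsSelfAdjointRel (Λ : Submodule ℂ (G × G)) : Prop := relAdjoint Λ = Λ

/-- A bounded operator is boundedly invertible if it has a bounded two-sided inverse. -/
def IsBoundedlyInvertible {E F : Type*} [NormedAddCommGroup E] [NormedSpace ℂ E]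
    [NormedAddCommGroup F] [NormedSpace ℂ F] (T : E →L[ℂ] F) : Prop :=
  ∃ T' : F →L[ℂ] E, (∀ x, T' (T x) = x) ∧ (∀ y, T (T' y) = y)

/-- The pair `(A,B)` is normalized if `A B* = B A*` and `M^{A,B}` is boundedly invertible. -/
noncomputable def IsNormalized (A B : G →L[ℂ] G) : Prop :=
  A ∘L adjoint B = B ∘L adjoint A ∧ IsBoundedlyInvertible (MAB A B)

/-!
In the variables `p = i x₁ - x₂`, `q = i x₁ + x₂` the two components of `M^{A,B} (x₁, x₂)` are
`p + U q` and `-i (p - U q)`. Two applications of the parallelogram law, together with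
`‖U q‖ = ‖q‖`, give the norm identity; solving `p + U q = y₁`, `p - U q = i y₂` for `p` and `U q`
gives surjectivity as soon as `U` is surjective.
-/

open Complex

section Cayley

variable {E : Type*} [NormedAddCommGroup E] [InnerProductSpace ℂ E] (U : E →L[ℂ] E) (x₁ x₂ : E)

lemma cayley_fst_eq :
    (I • (1 + U)) x₁ - (1 - U) x₂ = (I • x₁ - x₂) + U (I • x₁ + x₂) := by
  simp only [smul_apply, add_apply, sub_apply, one_apply_eq_self, map_add, map_smul]
  module

lemma cayley_snd_eq :
    (1 - U) x₁ + (I • (1 + U)) x₂ = -I • ((I • x₁ - x₂) - U (I • x₁ + x₂)) := by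
  simp only [smul_apply, add_apply, sub_apply, one_apply_eq_self, map_add, map_smul]
  linear_combination (norm := module) (-1 : ℂ) • I_mul_I • (U x₁ - x₁)

lemma cayley_norm_sq_add_norm_sq (hU : ∀ x, ‖U x‖ = ‖x‖) :
    ‖(I • (1 + U)) x₁ - (1 - U) x₂‖ ^ 2 + ‖(1 - U) x₁ + (I • (1 + U)) x₂‖ ^ 2
      = 2 ^ 2 * (‖x₁‖ ^ 2 + ‖x₂‖ ^ 2) := by
  have hI : ‖I • x₁‖ = ‖x₁‖ := by simp [norm_smul]
  rw [cayley_fst_eq, cayley_snd_eq, norm_smul, mul_pow, norm_neg, norm_I, one_pow, one_mul,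
    parallelogram_law_with_norm ℂ, hU, add_comm (_ ^ 2) (‖I • x₁ + x₂‖ ^ 2),
    parallelogram_law_with_norm ℂ, hI]
  ring

lemma MAB_apply (A B : E →L[ℂ] E) (x : E × E) :
    MAB A B x = (A x.1 - B x.2, B x.1 + A x.2) :=
  rfl

variable {U} in
lemma MAB_cayley_surjective (hU : Function.Surjective U) :
    Function.Surjective (MAB (I • (1 + U)) (1 - U)) := by
  rintro ⟨y₁, y₂⟩
  set p : E := (2⁻¹ : ℂ) • (y₁ + I • y₂)
  obtain ⟨q, hq⟩ := hU ((2⁻¹ : ℂ) • (y₁ - I • y₂))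
  refine ⟨⟨-(I / 2) • (p + q), (2⁻¹ : ℂ) • (q - p)⟩, ?_⟩
  have hp_eq : I • -(I / 2) • (p + q) - (2⁻¹ : ℂ) • (q - p) = p := by
    linear_combination (norm := module) (-(2⁻¹ : ℂ) • I_mul_I) • (p + q)
  have hq_eq : I • -(I / 2) • (p + q) + (2⁻¹ : ℂ) • (q - p) = q := by
    linear_combination (norm := module) (-(2⁻¹ : ℂ) • I_mul_I) • (p + q)
  rw [MAB_apply, cayley_fst_eq, cayley_snd_eq, hp_eq, hq_eq, hq]
  ext
  · module
  · linear_combination (norm := module) (-1 : ℂ) • I_mul_I • y₂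

end Cayley

theorem cayley_MAB_norm (U : G →L[ℂ] G) (hU : U ∈ unitary (G →L[ℂ] G)) :
    (∀ x₁ x₂ : G,
        ‖(Complex.I • (1 + U)) x₁ - (1 - U) x₂‖ ^ 2 + ‖(1 - U) x₁ + (Complex.I • (1 + U)) x₂‖ ^ 2
          = 2 ^ 2 * (‖x₁‖ ^ 2 + ‖x₂‖ ^ 2)) ∧
      Function.Surjective (MAB (Complex.I • (1 + U)) (1 - U)) :=
  ⟨fun x₁ x₂ => cayley_norm_sq_add_norm_sq U x₁ x₂ (norm_map_of_mem_unitary hU),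
    MAB_cayley_surjective fun y => ⟨star U y, congr($(Unitary.mul_star_self_of_mem hU) y)⟩⟩
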